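/- arXiv:math-ph/0306061 — 4 statements merged into one kernel-verified Lean document; each statement's English description precedes it below -/
import Mathlib

section
/- Every invertible quasi-permutation matrix over ℂ is diagonalizable. -/
/-!
Write `M = D * P` with `D = diagonal d` and `P` the matrix of the permutation `σ`. Since
`P * D * P⁻¹` is again diagonal, `M ^ m` for `m = orderOf σ` is the invertible diagonal matrix
whose entries are products of entries of `d` along the orbits of `σ`. So `M` is annihilated by
`∏ c, (X ^ m - c)`, the product over the distinct diagonal entries `c` of `M ^ m`; these factors
are separable and pairwise coprime because `c ≠ 0` and `m ≠ 0` in `ℂ`. A matrix with a squarefree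
annihilating polynomial over an algebraically closed field is semisimple, so it has an eigenbasis
and is diagonalizable.
-/

open Matrix

/-- A quasi-permutation matrix: `M = D * P` with `D` invertible diagonal and `P`
a permutation matrix, i.e. `M j l = d j • δ_{s j, l}` with all `d j ≠ 0`. -/
def IsQuasiPermMatrix {N : ℕ} (M : Matrix (Fin N) (Fin N) ℂ) : Prop :=
  ∃ (d : Fin N → ℂ) (s : Equiv.Perm (Fin N)), (∀ j, d j ≠ 0) ∧
    ∀ j l, M j l = if s j = l then d j else 0

open Polynomial Module

theorem Module.End.exists_basis_eigenvectors_of_iSup_eigenspace_eq_top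
    {K V ι : Type*} [Field K] [AddCommGroup V] [Module K V] {f : End K V}
    (hf : ⨆ μ, f.eigenspace μ = ⊤) (b₀ : Basis ι K V) :
    ∃ (b : Basis ι K V) (t : ι → K), ∀ i, f (b i) = t i • b i := by
  classical
  have hinternal := DirectSum.isInternal_submodule_of_iSupIndep_of_iSup_eq_top
    f.eigenspaces_iSupIndep hf
  let b := hinternal.collectedBasis fun μ ↦ Free.chooseBasis K (f.eigenspace μ)
  let e := b.indexEquiv b₀
  refine ⟨b.reindex e, fun i ↦ (e.symm i).1, fun i ↦ ?_⟩
  rw [Basis.reindex_apply]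
  exact End.mem_eigenspace_iff.mp (hinternal.collectedBasis_mem _ _)

theorem Matrix.exists_isUnit_conj_eq_diagonal_of_basis {R n : Type*} [CommRing R] [Fintype n]
    [DecidableEq n] (M : Matrix n n R) (b : Basis n R (n → R)) (t : n → R)
    (hb : ∀ i, M *ᵥ b i = t i • b i) :
    ∃ S : Matrix n n R, IsUnit S ∧ S * M * S⁻¹ = diagonal t := by
  let e := Pi.basisFun R n
  have hS : b.toMatrix e * e.toMatrix b = 1 := b.toMatrix_mul_toMatrix_flip e
  refine ⟨b.toMatrix e, .of_mul_eq_one _ hS, ?_⟩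
  have hconj := basis_toMatrix_mul_linearMap_toMatrix_mul_basis_toMatrix
    (b := b) (b' := e) (c := b) (c' := e) (toLin' M)
  rw [LinearMap.toMatrix_eq_toMatrix', LinearMap.toMatrix'_toLin'] at hconj
  rw [inv_eq_right_inv hS, hconj]
  ext i j
  rw [LinearMap.toMatrix_apply, toLin'_apply, hb, map_smul, b.repr_self]
  rcases eq_or_ne i j with rfl | hij <;> simp [*]

theorem Matrix.exists_isUnit_conj_eq_diagonal_of_squarefree {K n : Type*} [Field K] [IsAlgClosed K]
    [Fintype n] [DecidableEq n] (M : Matrix n n K) {p : K[X]} (hp : Squarefree p)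
    (hMp : aeval M p = 0) :
    ∃ (S : Matrix n n K) (t : n → K), IsUnit S ∧ S * M * S⁻¹ = diagonal t := by
  have hfp : aeval (toLin' M) p = 0 := by
    rw [show toLin' M = toLinAlgEquiv' M from rfl, ← AlgEquiv.coe_toAlgHom, aeval_algHom_apply,
      hMp, map_zero]
  obtain ⟨b, t, hb⟩ := End.exists_basis_eigenvectors_of_iSup_eigenspace_eq_top
    (End.isSemisimple_of_squarefree_aeval_eq_zero hp hfp).iSup_eigenspace_eq_top (Pi.basisFun K n)
  obtain ⟨S, hS⟩ := M.exists_isUnit_conj_eq_diagonal_of_basis b t hb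
  exact ⟨S, t, hS⟩

theorem Polynomial.separable_prod_X_pow_sub_C {K : Type*} [Field K] {m : ℕ} (hm : (m : K) ≠ 0)
    {T : Finset K} (hT : ∀ c ∈ T, c ≠ 0) : (∏ c ∈ T, (X ^ m - C c)).Separable := by
  have hexpand (c : K) : X ^ m - C c = expand K m (X - C c) := by
    rw [map_sub, expand_X, expand_C]
  refine separable_prod' (f := fun c ↦ X ^ m - C c) (fun a _ b _ hab ↦ ?_)
    fun c hc ↦ separable_X_pow_sub_C c hm (hT c hc)
  rw [hexpand, hexpand]
  exact (isCoprime_X_sub_C_of_isUnit_sub (sub_ne_zero.2 hab).isUnit).map (expand K m).toRingHom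

theorem Matrix.aeval_diagonal {R n : Type*} [CommSemiring R] [Fintype n] [DecidableEq n]
    (e : n → R) (q : R[X]) : aeval (diagonal e) q = diagonal fun j ↦ eval (e j) q := by
  rw [← diagonalAlgHom_apply (R := R), aeval_algHom_apply, aeval_pi_apply]
  rfl

theorem Matrix.exists_isUnit_conj_eq_diagonal_of_pow_eq_diagonal {K n : Type*} [Field K]
    [IsAlgClosed K] [Fintype n] [DecidableEq n] {M : Matrix n n K} {m : ℕ} (hm : (m : K) ≠ 0)
    {e : n → K} (he : ∀ j, e j ≠ 0) (hMm : M ^ m = diagonal e) :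
    ∃ (S : Matrix n n K) (t : n → K), IsUnit S ∧ S * M * S⁻¹ = diagonal t := by
  classical
  let T := Finset.univ.image e
  refine M.exists_isUnit_conj_eq_diagonal_of_squarefree
    (separable_prod_X_pow_sub_C hm (T := T) (by simpa [T] using he)).squarefree ?_
  have hexpand : ∏ c ∈ T, (X ^ m - C c) = expand K m (∏ c ∈ T, (X - C c)) := by
    simp only [map_prod, map_sub, expand_X, expand_C]
  rw [hexpand, expand_aeval, hMm, aeval_diagonal, diagonal_eq_zero]
  funext j
  rw [Pi.zero_apply, eval_prod, Finset.prod_eq_zero_iff]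
  exact ⟨e j, Finset.mem_image_of_mem e (Finset.mem_univ j), by simp⟩

theorem Matrix.permMatrix_mul_diagonal {R n : Type*} [Semiring R] [Fintype n] [DecidableEq n]
    (σ : Equiv.Perm n) (e : n → R) :
    σ.permMatrix R * diagonal e = diagonal (e ∘ σ) * σ.permMatrix R := by
  rw [PEquiv.toMatrix_toPEquiv_mul, PEquiv.mul_toMatrix_toPEquiv]
  ext i j
  simp [diagonal_apply, Equiv.eq_symm_apply, eq_comm]

theorem Matrix.diagonal_mul_permMatrix_pow {R n : Type*} [CommSemiring R] [Fintype n]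
    [DecidableEq n] (d : n → R) (σ : Equiv.Perm n) (k : ℕ) :
    (diagonal d * σ.permMatrix R) ^ k =
      diagonal (fun j ↦ ∏ i ∈ Finset.range k, d ((σ ^ i) j)) * (σ ^ k).permMatrix R := by
  induction k with
  | zero => simp
  | succ k ih =>
    rw [pow_succ', ih, mul_assoc, ← mul_assoc (σ.permMatrix R), permMatrix_mul_diagonal,
      mul_assoc, ← permMatrix_mul, ← pow_succ, ← mul_assoc, diagonal_mul_diagonal]
    congr 2
    ext j
    rw [Finset.prod_range_succ', pow_zero, Equiv.Perm.one_apply, mul_comm]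
    simp [pow_succ, Equiv.Perm.mul_apply]

/-- Every (invertible) quasi-permutation matrix over `ℂ` is diagonalizable:
it is similar to a diagonal matrix. -/
theorem stmt2 {N : ℕ} (M : Matrix (Fin N) (Fin N) ℂ) (hM : IsQuasiPermMatrix M) :
    ∃ (S : Matrix (Fin N) (Fin N) ℂ) (t : Fin N → ℂ),
      IsUnit S ∧ S * M * S⁻¹ = Matrix.diagonal t := by
  obtain ⟨d, s, hd, hM⟩ := hM
  have hDP : M = diagonal d * s.permMatrix ℂ := by
    ext j l
    simp [hM]
  have hMm : M ^ orderOf s = diagonal fun j ↦ ∏ i ∈ Finset.range (orderOf s), d ((s ^ i) j) := by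
    rw [hDP, diagonal_mul_permMatrix_pow, pow_orderOf_eq_one, permMatrix_one, mul_one]
  exact exists_isUnit_conj_eq_diagonal_of_pow_eq_diagonal (Nat.cast_ne_zero.2 (orderOf_pos s).ne')
    (fun j ↦ Finset.prod_ne_zero_iff.2 fun i _ ↦ hd _) hMm
end

section
/- If every eigenvalue of a quasi-permutation matrix M = D·P (D invertible diagonal, P the permutation matrix of s ∈ S_N) restricted to an invariant coordinate subspace corresponding to a cycle of s of length k is a k-th root of a fixed nonzero complex number, then the characteristic polynomial of M factors as the product over the cycles c of s of (x^{|c|} − d_c), where d_c is the product of the diagonal entries of D over the indices in the cycle c. -/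
/-!
In the Leibniz expansion of `det (X - M)`, written with entries `(X - M) i (σ i)`, the term of `σ`
vanishes unless `σ` agrees with `s` at every point it moves, i.e. unless every cycle of `σ` is a
cycle of `s`. Such `σ` correspond to the subsets `T` of the cycles of `s`, and the sign of a cycle
of length `k` cancels the `(-1) ^ k` coming from its off-diagonal entries `-d j`, so the term of `σ`
is `∏_{c ∈ T} (-d_c) * ∏_{c ∉ T} X ^ |c| * ∏_{s j = j} (X - d j)`. Summing over `T` is the expansion
of `∏_c (X ^ |c| - d_c)`.
-/

open Matrix Polynomial Finset

namespace Equiv.Perm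

variable {α : Type*} [Fintype α] [DecidableEq α]

theorem cycleFactorsFinset_subset_iff {σ τ : Perm α} :
    σ.cycleFactorsFinset ⊆ τ.cycleFactorsFinset ↔ ∀ i, σ i ≠ i → σ i = τ i := by
  constructor
  · intro h i hi
    obtain ⟨c, hc, hic⟩ := mem_support_iff_mem_support_of_mem_cycleFactorsFinset.mp
      (mem_support.mpr hi)
    rw [← (mem_cycleFactorsFinset_iff.mp hc).2 i hic,
      (mem_cycleFactorsFinset_iff.mp (h hc)).2 i hic]
  · intro h c hc
    obtain ⟨hcycle, hcσ⟩ := mem_cycleFactorsFinset_iff.mp hc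
    refine mem_cycleFactorsFinset_iff.mpr ⟨hcycle, fun a ha => ?_⟩
    rw [hcσ a ha, h a (mem_support.mp (mem_cycleFactorsFinset_support_le hc ha))]

theorem exists_cycleFactorsFinset_eq_of_subset {τ : Perm α} {T : Finset (Perm α)}
    (hT : T ⊆ τ.cycleFactorsFinset) : ∃ σ : Perm α, σ.cycleFactorsFinset = T := by
  have hdisj : (T : Set (Perm α)).Pairwise Disjoint :=
    τ.cycleFactorsFinset_pairwise_disjoint.mono (coe_subset.mpr hT)
  exact ⟨_, cycleFactorsFinset_eq_finset.mpr
    ⟨fun c hc => (mem_cycleFactorsFinset_iff.mp (hT hc)).1, hdisj, rfl⟩⟩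

theorem prod_support_eq_prod_cycleFactorsFinset {M : Type*} [CommMonoid M] (σ : Perm α)
    (f : α → M) : ∏ i ∈ σ.support, f i = ∏ c ∈ σ.cycleFactorsFinset, ∏ i ∈ c.support, f i := by
  have hsupp : σ.support = σ.cycleFactorsFinset.biUnion support := by
    ext i
    rw [mem_support_iff_mem_support_of_mem_cycleFactorsFinset, mem_biUnion]
  rw [hsupp, prod_biUnion]
  exact fun c hc c' hc' hne =>
    (σ.cycleFactorsFinset_pairwise_disjoint hc hc' hne).disjoint_support

theorem card_support_eq_sum_cycleFactorsFinset (σ : Perm α) :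
    #σ.support = ∑ c ∈ σ.cycleFactorsFinset, #c.support := by
  rw [← sum_cycleType, cycleType_def, sum_eq_multiset_sum]
  rfl

theorem card_support_sdiff_of_cycleFactorsFinset_subset {σ τ : Perm α}
    (h : σ.cycleFactorsFinset ⊆ τ.cycleFactorsFinset) :
    #(τ.support \ σ.support) = ∑ c ∈ τ.cycleFactorsFinset \ σ.cycleFactorsFinset, #c.support := by
  have hsupp : σ.support ⊆ τ.support := fun i hi => by
    rw [mem_support] at hi ⊢
    rwa [← cycleFactorsFinset_subset_iff.mp h i hi]
  rw [card_sdiff_of_subset hsupp, card_support_eq_sum_cycleFactorsFinset,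
    card_support_eq_sum_cycleFactorsFinset, ← sum_sdiff h, Nat.add_sub_cancel]

theorem sign_eq_prod_cycleFactorsFinset (σ : Perm α) :
    sign σ = ∏ c ∈ σ.cycleFactorsFinset, -(-1) ^ #c.support := by
  rw [sign_of_cycleType', cycleType_def, Multiset.map_map]
  rfl

theorem sign_mul_prod_support_neg {R : Type*} [CommRing R] (σ : Perm α) (f : α → R) :
    ((sign σ : ℤ) : R) * ∏ i ∈ σ.support, -f i =
      ∏ c ∈ σ.cycleFactorsFinset, -∏ i ∈ c.support, f i := by
  rw [sign_eq_prod_cycleFactorsFinset, prod_support_eq_prod_cycleFactorsFinset]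
  push_cast
  rw [← prod_mul_distrib]
  refine prod_congr rfl fun c _ => ?_
  rw [prod_neg, ← mul_assoc, neg_mul, ← pow_add, ← two_mul, pow_mul, neg_one_sq, one_pow,
    neg_one_mul]

end Equiv.Perm

namespace Matrix

open Equiv

variable {R : Type*} [CommRing R] {α : Type*} [Fintype α] [DecidableEq α]
  {d : α → R} {s : Perm α} {M : Matrix α α R}

theorem prod_charmatrix_apply_eq_zero (hM : ∀ j l, M j l = if s j = l then d j else 0)
    {σ : Perm α} (hσ : ¬ σ.cycleFactorsFinset ⊆ s.cycleFactorsFinset) :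
    ∏ i, charmatrix M i (σ i) = 0 := by
  obtain ⟨i, hi, his⟩ : ∃ i, σ i ≠ i ∧ σ i ≠ s i := by
    simpa [Perm.cycleFactorsFinset_subset_iff] using hσ
  refine prod_eq_zero (mem_univ i) ?_
  rw [charmatrix_apply_ne _ _ _ (Ne.symm hi), hM, if_neg (Ne.symm his), map_zero, neg_zero]

theorem prod_charmatrix_apply (hM : ∀ j l, M j l = if s j = l then d j else 0)
    {σ : Perm α} (hσ : σ.cycleFactorsFinset ⊆ s.cycleFactorsFinset) :
    ∏ i, charmatrix M i (σ i) =
      (∏ i ∈ σ.support, -C (d i)) * X ^ #(s.support \ σ.support) *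
        ∏ i ∈ univ.filter (fun i => s i = i), (X - C (d i)) := by
  have hσs := Perm.cycleFactorsFinset_subset_iff.mp hσ
  have hentry : ∀ i, charmatrix M i (σ i) =
      (if i ∈ σ.support then -C (d i) else 1) * (if i ∈ s.support \ σ.support then X else 1) *
        (if s i = i then X - C (d i) else 1) := by
    intro i
    by_cases hi : σ i = i
    · by_cases hsi : s i = i <;> simp [hi, hsi, charmatrix_apply_eq, hM]
    · have hsi : s i ≠ i := hσs i hi ▸ hi
      rw [charmatrix_apply_ne _ _ _ (Ne.symm hi), hM, if_pos (hσs i hi).symm]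
      simp [hi, hsi]
  rw [prod_congr rfl fun i _ => hentry i, prod_mul_distrib, prod_mul_distrib, prod_ite_mem,
    prod_ite_mem, prod_filter, univ_inter, univ_inter, prod_const]

theorem charpoly_eq_prod_cycleFactorsFinset (hM : ∀ j l, M j l = if s j = l then d j else 0) :
    M.charpoly =
      (∏ c ∈ s.cycleFactorsFinset, (X ^ #c.support - C (∏ j ∈ c.support, d j))) *
        ∏ j ∈ univ.filter (fun j => s j = j), (X - C (d j)) := by
  set fixed := ∏ j ∈ univ.filter (fun j => s j = j), (X - C (d j))
  let term : Finset (Perm α) → R[X] := fun T =>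
    (∏ c ∈ T, -C (∏ j ∈ c.support, d j)) * (∏ c ∈ s.cycleFactorsFinset \ T, X ^ #c.support) *
      fixed
  have hexpand : (∏ c ∈ s.cycleFactorsFinset, (X ^ #c.support - C (∏ j ∈ c.support, d j))) *
      fixed = ∑ T ∈ s.cycleFactorsFinset.powerset, term T := by
    simp_rw [sub_eq_neg_add, prod_add, sum_mul]
    rfl
  have hterm : ∀ σ : Perm α, σ.cycleFactorsFinset ⊆ s.cycleFactorsFinset →
      ((Perm.sign σ : ℤ) : R[X]) * ∏ i, charmatrix M i (σ i) = term σ.cycleFactorsFinset := by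
    intro σ hσ
    rw [prod_charmatrix_apply hM hσ, ← mul_assoc, ← mul_assoc,
      Perm.sign_mul_prod_support_neg, Perm.card_support_sdiff_of_cycleFactorsFinset_subset hσ,
      ← prod_pow_eq_pow_sum]
    simp only [term, fixed, map_prod]
  have hvanish : ∀ σ : Perm α, ((Perm.sign σ : ℤ) : R[X]) * ∏ i, charmatrix M i (σ i) ≠ 0 →
      σ.cycleFactorsFinset ⊆ s.cycleFactorsFinset := fun σ hne => by
    by_contra hσ
    rw [prod_charmatrix_apply_eq_zero hM hσ, mul_zero] at hne
    exact hne rfl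
  rw [hexpand, charpoly, ← det_transpose, det_apply']
  simp only [transpose_apply]
  rw [← sum_filter_of_ne fun σ _ => hvanish σ]
  refine sum_nbij Perm.cycleFactorsFinset (fun σ hσ => mem_powerset.mpr (mem_filter.mp hσ).2)
    (fun σ _ τ _ h => Perm.cycleFactorsFinset_injective h) (fun T hT => ?_)
    (fun σ hσ => hterm σ (mem_filter.mp hσ).2)
  obtain ⟨σ, rfl⟩ := Perm.exists_cycleFactorsFinset_eq_of_subset (mem_powerset.mp hT)
  exact ⟨σ, by simpa using mem_powerset.mp hT, rfl⟩

end Matrix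

theorem stmt5_general (N : ℕ) (d : Fin N → ℂ)
    (s : Equiv.Perm (Fin N)) (M : Matrix (Fin N) (Fin N) ℂ)
    (hM : ∀ j l, M j l = if s j = l then d j else 0) :
    M.charpoly =
      (∏ c ∈ s.cycleFactorsFinset,
        (X ^ c.support.card - C (∏ j ∈ c.support, d j))) *
      ∏ j ∈ Finset.univ.filter (fun j => s j = j), (X - C (d j)) :=
  Matrix.charpoly_eq_prod_cycleFactorsFinset hM

/-- Let `M = D·P` with `D = diag(d_1,…,d_N)` invertible and `P` the permutation
matrix of `s ∈ S_N`, so `M_{j,l} = d_j δ_{s j, l}`. If every eigenvalue of `M`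
whose eigenvector is supported on the coordinate subspace of a cycle `c` of `s`
of length `k = |c|` is a `k`-th root of the fixed nonzero number
`d_c = ∏_{j ∈ c} d_j`, then the characteristic polynomial of `M` factors as the
product over the cycles `c` of `s` (fixed points counting as 1-cycles) of
`(X^{|c|} − d_c)`. -/
theorem stmt5 (N : ℕ) (d : Fin N → ℂ) (hd : ∀ j, d j ≠ 0)
    (s : Equiv.Perm (Fin N)) (M : Matrix (Fin N) (Fin N) ℂ)
    (hM : ∀ j l, M j l = if s j = l then d j else 0)
    (hyp : ∀ c ∈ s.cycleFactorsFinset, ∀ z : ℂ, ∀ v : Fin N → ℂ, v ≠ 0 →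
      (∀ j, j ∉ c.support → v j = 0) → M.mulVec v = z • v →
      z ^ c.support.card = ∏ j ∈ c.support, d j) :
    M.charpoly =
      (∏ c ∈ s.cycleFactorsFinset,
        (X ^ c.support.card - C (∏ j ∈ c.support, d j))) *
      ∏ j ∈ Finset.univ.filter (fun j => s j = j), (X - C (d j)) :=
  stmt5_general N d s M hM
end

section
/- Let s_1, …, s_M ∈ S_N satisfy s_M ∘ s_{M-1} ∘ ⋯ ∘ s_1 = id, and suppose the subgroup generated by s_1, …, s_M is transitive. If each s_n decomposes into disjoint cycles of lengths k_{n,1}, k_{n,2}, …, and g is defined via the Riemann–Hurwitz formula by ∑_{n,i} (k_{n,i} − 1) = 2(g + N − 1), then g is a nonnegative integer, i.e. ∑_{n,i}(k_{n,i} − 1) ≥ 2(N−1) and ∑_{n,i}(k_{n,i} − 1) ≡ 0 (mod 2). -/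
open Equiv Equiv.Perm Subgroup

set_option linter.unusedSectionVars false

variable {α : Type*} [Fintype α] [DecidableEq α]

lemma RH_W {π : Perm α} {a b x : α} (hxa : ¬ π.SameCycle x a) (hxb : ¬ π.SameCycle x b) :
    ∀ k : ℕ, ((swap a b * π) ^ k) x = (π ^ k) x := by
  intro k
  induction k with
  | zero => rfl
  | succ k ih =>
    rw [pow_succ', pow_succ', mul_apply, ih, mul_apply, mul_apply]
    have h1 : π ((π ^ k) x) ≠ a := fun h => hxa ⟨((k + 1 : ℕ) : ℤ), by
      rw [zpow_natCast, pow_succ', mul_apply, h]⟩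
    have h2 : π ((π ^ k) x) ≠ b := fun h => hxb ⟨((k + 1 : ℕ) : ℤ), by
      rw [zpow_natCast, pow_succ', mul_apply, h]⟩
    exact swap_apply_of_ne_of_ne h1 h2

lemma RH_M {π : Perm α} {a b : α} (hab : ¬ π.SameCycle a b) :
    (swap a b * π).SameCycle a b := by
  have hper : Function.IsPeriodicPt (⇑π) (orderOf π) b := by
    rw [Function.IsPeriodicPt, Function.IsFixedPt, Equiv.Perm.iterate_eq_pow,
      pow_orderOf_eq_one]
    rfl
  have hnpos : 0 < Function.minimalPeriod (⇑π) b :=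
    Function.IsPeriodicPt.minimalPeriod_pos (orderOf_pos π) hper
  obtain ⟨m, hm⟩ : ∃ m, Function.minimalPeriod (⇑π) b = m + 1 :=
    ⟨Function.minimalPeriod (⇑π) b - 1, by omega⟩
  have hnb : (π ^ (m + 1)) b = b := by
    rw [← Equiv.Perm.iterate_eq_pow, ← hm]; exact Function.iterate_minimalPeriod
  have key : ∀ k, k < m + 1 → ((swap a b * π) ^ k) b = (π ^ k) b := by
    intro k hk
    induction k with
    | zero => rfl
    | succ k ih =>
      rw [pow_succ', pow_succ', mul_apply, ih (Nat.lt_of_succ_lt hk), mul_apply, mul_apply]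
      have h1 : π ((π ^ k) b) ≠ a := fun h => hab (Equiv.Perm.SameCycle.symm
        ⟨((k + 1 : ℕ) : ℤ), by rw [zpow_natCast, pow_succ', mul_apply, h]⟩)
      have h2 : π ((π ^ k) b) ≠ b := by
        intro h
        have hp : Function.IsPeriodicPt (⇑π) (k + 1) b := by
          rw [Function.IsPeriodicPt, Function.IsFixedPt, Equiv.Perm.iterate_eq_pow,
            pow_succ', mul_apply, h]
        have := Function.IsPeriodicPt.minimalPeriod_le (Nat.succ_pos k) hp
        omega
      exact swap_apply_of_ne_of_ne h1 h2
  have hfin : ((swap a b * π) ^ (m + 1)) b = a := by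
    rw [pow_succ', mul_apply, key m (by omega), mul_apply, ← mul_apply π, ← pow_succ', hnb]
    exact swap_apply_right a b
  exact Equiv.Perm.SameCycle.symm ⟨((m + 1 : ℕ) : ℤ), by rw [zpow_natCast, hfin]⟩

private lemma RH_K_main {π : Perm α} {a b x y : α} (h : (swap a b * π).SameCycle x y) :
    π.SameCycle x y ∨ π.SameCycle y a ∨ π.SameCycle y b := by
  have step : ∀ w, (π.SameCycle x w ∨ π.SameCycle w a ∨ π.SameCycle w b) →
      (π.SameCycle x ((swap a b * π) w) ∨ π.SameCycle ((swap a b * π) w) a ∨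
        π.SameCycle ((swap a b * π) w) b) := by
    intro w hw
    rw [mul_apply]
    rcases eq_or_ne (π w) a with h1 | h1
    · rw [h1, swap_apply_left]
      right; right; exact Equiv.Perm.SameCycle.refl π b
    rcases eq_or_ne (π w) b with h2 | h2
    · rw [h2, swap_apply_right]
      right; left; exact Equiv.Perm.SameCycle.refl π a
    rw [swap_apply_of_ne_of_ne h1 h2]
    have hwu : π.SameCycle w (π w) := ⟨1, by simp⟩
    rcases hw with hw | hw | hw
    · exact Or.inl (hw.trans hwu)
    · exact Or.inr (Or.inl (hwu.symm.trans hw))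
    · exact Or.inr (Or.inr (hwu.symm.trans hw))
  have all : ∀ k : ℕ, π.SameCycle x (((swap a b * π) ^ k) x) ∨
      π.SameCycle (((swap a b * π) ^ k) x) a ∨ π.SameCycle (((swap a b * π) ^ k) x) b := by
    intro k
    induction k with
    | zero => exact Or.inl (Equiv.Perm.SameCycle.refl π x)
    | succ k ih =>
      rw [pow_succ', mul_apply]
      exact step _ ih
  obtain ⟨k, -, hk⟩ := h.exists_pow_eq'
  rw [← hk]
  exact all k

lemma RH_K {π : Perm α} {a b x y : α} (h : (swap a b * π).SameCycle x y) :
    π.SameCycle x y ∨ ((π.SameCycle x a ∨ π.SameCycle x b) ∧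
      (π.SameCycle y a ∨ π.SameCycle y b)) := by
  rcases RH_K_main h with h1 | h1
  · exact Or.inl h1
  rcases RH_K_main h.symm with h2 | h2
  · exact Or.inl h2.symm
  exact Or.inr ⟨h2, h1⟩

/-- MERGE: if `a,b` are in different cycles of `σ`, every cycle of `σ` is contained in a
cycle of `swap a b * σ`. -/
lemma RH_merge {σ : Perm α} {a b : α} (hab : ¬ σ.SameCycle a b) {x y : α}
    (h : σ.SameCycle x y) : (swap a b * σ).SameCycle x y := by
  have hab' : (swap a b * σ).SameCycle a b := RH_M hab
  have hσ : σ = swap a b * (swap a b * σ) := by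
    rw [← mul_assoc, swap_mul_self, one_mul]
  rcases RH_K (x := x) (y := y) (π := swap a b * σ) (a := a) (b := b) (by rw [← hσ]; exact h)
    with h1 | ⟨hx, hy⟩
  · exact h1
  have hx' : (swap a b * σ).SameCycle x a := by
    rcases hx with h' | h'
    · exact h'
    · exact h'.trans hab'.symm
  have hy' : (swap a b * σ).SameCycle y a := by
    rcases hy with h' | h'
    · exact h'
    · exact h'.trans hab'.symm
  exact hx'.trans hy'.symm

-- quotient plumbing test
noncomputable def ccount (σ : Perm α) : ℕ := Nat.card (Quotient (SameCycle.setoid σ))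

example (σ : Perm α) (x y : α) (h : σ.SameCycle x y) :
    Quotient.mk (SameCycle.setoid σ) x = Quotient.mk (SameCycle.setoid σ) y :=
  Quotient.sound h

example (σ : Perm α) (x y : α)
    (h : Quotient.mk (SameCycle.setoid σ) x = Quotient.mk (SameCycle.setoid σ) y) :
    σ.SameCycle x y := Quotient.exact h

example (σ : Perm α) : Finite (Quotient (SameCycle.setoid σ)) := inferInstance

lemma count_eq_card {s : Setoid α} (h : ∀ x y : α, s.r x y ↔ x = y) :
    Nat.card (Quotient s) = Fintype.card α := by
  have : Function.Bijective (Quotient.mk s) := by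
    constructor
    · intro x y hxy
      exact (h x y).mp (Quotient.exact hxy)
    · exact Quotient.exists_rep
  rw [← Nat.card_eq_fintype_card]
  exact (Nat.card_eq_of_bijective _ this).symm

lemma ccount_one : ccount (1 : Perm α) = Fintype.card α :=
  count_eq_card fun x y => sameCycle_one

/-- Auxiliary: if `x` is in neither `tπ`-cycle of `a` nor `b`, then its `π`-cycle and
`tπ`-cycle coincide (one inclusion). -/
lemma RH_notnear {π : Perm α} {a b x y : α}
    (hxa : ¬ (swap a b * π).SameCycle x a) (hxb : ¬ (swap a b * π).SameCycle x b)
    (h : (swap a b * π).SameCycle x y) : π.SameCycle x y := by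
  obtain ⟨k, -, hk⟩ := h.exists_pow_eq'
  have hW := RH_W (π := swap a b * π) (a := a) (b := b) hxa hxb k
  rw [← mul_assoc, swap_mul_self, one_mul] at hW
  exact ⟨k, by rw [zpow_natCast, hW, hk]⟩

/-- The reverse: if `x` is in neither `π`-cycle of `a` nor `b`. -/
lemma RH_notnear' {π : Perm α} {a b x y : α}
    (hxa : ¬ π.SameCycle x a) (hxb : ¬ π.SameCycle x b)
    (h : π.SameCycle x y) : (swap a b * π).SameCycle x y := by
  obtain ⟨k, -, hk⟩ := h.exists_pow_eq'
  exact ⟨k, by rw [zpow_natCast, RH_W hxa hxb k, hk]⟩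

lemma RH_cc_le (π : Perm α) (a b : α) : ccount (swap a b * π) ≤ ccount π + 1 := by
  classical
  have wd : ∀ x y : α, (swap a b * π).SameCycle x y →
      (if (swap a b * π).SameCycle x a then Sum.inr () else Sum.inl (Quotient.mk (SameCycle.setoid π) x))
      = (if (swap a b * π).SameCycle y a then Sum.inr ()
          else Sum.inl (Quotient.mk (SameCycle.setoid π) y)) := by
    intro x y hxy
    by_cases hya : (swap a b * π).SameCycle y a
    · rw [if_pos (hxy.trans hya), if_pos hya]
    · rw [if_neg (fun h => hya (hxy.symm.trans h)), if_neg hya]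
      have hxa : ¬ (swap a b * π).SameCycle x a := fun h => hya (hxy.symm.trans h)
      congr 1
      apply Quotient.sound
      by_cases hxb : (swap a b * π).SameCycle x b
      · -- merge case for t*π : a,b in different (t*π)-cycles
        have hab : ¬ (swap a b * π).SameCycle a b := fun h => hxa (hxb.trans h.symm)
        have := RH_merge (σ := swap a b * π) hab hxy
        rwa [← mul_assoc, swap_mul_self, one_mul] at this
      · exact RH_notnear hxa hxb hxy
  set f : Quotient (SameCycle.setoid (swap a b * π)) → (Quotient (SameCycle.setoid π)) ⊕ Unit :=
    Quotient.lift (fun x => if (swap a b * π).SameCycle x a then Sum.inr ()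
      else Sum.inl (Quotient.mk (SameCycle.setoid π) x)) wd with hf
  have hinj : Function.Injective f := by
    intro q q'
    obtain ⟨x, rfl⟩ := Quotient.exists_rep q
    obtain ⟨y, rfl⟩ := Quotient.exists_rep q'
    simp only [hf, Quotient.lift_mk]
    by_cases hxa : (swap a b * π).SameCycle x a <;> by_cases hya : (swap a b * π).SameCycle y a <;>
      simp only [if_pos, if_neg, hxa, hya, if_true, if_false]
    · intro _; exact Quotient.sound (hxa.trans hya.symm)
    · intro h; exact absurd h (by simp)
    · intro h; exact absurd h (by simp)
    · intro h
      apply Quotient.sound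
      have hxy : π.SameCycle x y := Quotient.exact (Sum.inl.inj h)
      -- show (t*π).SameCycle x y
      by_cases hpxa : π.SameCycle x a
      · -- x is π-near
        by_cases hab : π.SameCycle a b
        · -- split case: show x ≈ b and y ≈ b
          have hnear : ∀ z : α, π.SameCycle z a → ¬ (swap a b * π).SameCycle z a →
              (swap a b * π).SameCycle z b := by
            intro z hza hza'
            by_contra hzb'
            obtain ⟨k, -, hk⟩ := hza.exists_pow_eq'
            have hW := RH_W (π := swap a b * π) (a := a) (b := b) hza' hzb' k
            rw [← mul_assoc, swap_mul_self, one_mul] at hW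
            exact hza' ⟨k, by rw [zpow_natCast, ← hW, hk]⟩
          have hx := hnear x hpxa hxa
          have hy := hnear y (hxy.symm.trans hpxa) hya
          exact hx.trans hy.symm
        · exact RH_merge hab hxy
      · by_cases hpxb : π.SameCycle x b
        · -- merge case
          have hab : ¬ π.SameCycle a b := fun h => hpxa (hpxb.trans h.symm)
          exact RH_merge hab hxy
        · exact RH_notnear' hpxa hpxb hxy
  calc ccount (swap a b * π) ≤ Nat.card ((Quotient (SameCycle.setoid π)) ⊕ Unit) :=
        Nat.card_le_card_of_injective f hinj
    _ = ccount π + 1 := by rw [Nat.card_sum]; simp [ccount]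

lemma RH_cc_drop {π : Perm α} {a b : α} (hab : ¬ π.SameCycle a b) :
    ccount (swap a b * π) + 1 ≤ ccount π := by
  classical
  have := Fintype.ofFinite (Quotient (SameCycle.setoid π))
  have := Fintype.ofFinite (Quotient (SameCycle.setoid (swap a b * π)))
  set f : Quotient (SameCycle.setoid π) → Quotient (SameCycle.setoid (swap a b * π)) :=
    Quotient.lift (fun x => Quotient.mk (SameCycle.setoid (swap a b * π)) x)
      (fun x y h => Quotient.sound (RH_merge hab h)) with hf
  have hsurj : Function.Surjective f := by
    intro q
    obtain ⟨x, rfl⟩ := Quotient.exists_rep q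
    exact ⟨Quotient.mk _ x, rfl⟩
  have hninj : ¬ Function.Injective f := by
    intro hinj
    have : Quotient.mk (SameCycle.setoid π) a = Quotient.mk (SameCycle.setoid π) b := by
      apply hinj
      simp only [hf, Quotient.lift_mk]
      exact Quotient.sound (RH_M hab)
    exact hab (Quotient.exact this)
  have := Fintype.card_lt_of_surjective_not_injective f hsurj hninj
  simp only [ccount]
  rw [Nat.card_eq_fintype_card, Nat.card_eq_fintype_card]
  omega

def orbRel (G : Subgroup (Perm α)) (x y : α) : Prop := ∃ g ∈ G, g x = y

lemma orbRel.refl' (G : Subgroup (Perm α)) (x : α) : orbRel G x x := ⟨1, G.one_mem, rfl⟩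

lemma orbRel.symm' {G : Subgroup (Perm α)} {x y : α} : orbRel G x y → orbRel G y x :=
  fun ⟨g, hg, h⟩ => ⟨g⁻¹, inv_mem hg, by rw [← h]; simp⟩

lemma orbRel.trans' {G : Subgroup (Perm α)} {x y z : α} :
    orbRel G x y → orbRel G y z → orbRel G x z :=
  fun ⟨g, hg, h⟩ ⟨g', hg', h'⟩ => ⟨g' * g, mul_mem hg' hg, by rw [mul_apply, h, h']⟩

def orbSetoid (G : Subgroup (Perm α)) : Setoid α :=
  ⟨orbRel G, ⟨orbRel.refl' G, orbRel.symm', orbRel.trans'⟩⟩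

noncomputable def ocount (G : Subgroup (Perm α)) : ℕ := Nat.card (Quotient (orbSetoid G))

lemma orbRel_mono {G G' : Subgroup (Perm α)} (h : G ≤ G') {x y : α} :
    orbRel G x y → orbRel G' x y := fun ⟨g, hg, hgx⟩ => ⟨g, h hg, hgx⟩

/-- (KO): orbits of `closure (insert (swap a b) S)` only connect within the union of
the orbit of `x` and orbits of `a, b` under `closure S`. -/
lemma RH_KO {S : Set (Perm α)} {a b x y : α}
    (h : orbRel (Subgroup.closure (insert (Equiv.swap a b) S)) x y) :
    orbRel (Subgroup.closure S) x y ∨ orbRel (Subgroup.closure S) a y ∨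
      orbRel (Subgroup.closure S) b y := by
  set G := Subgroup.closure S with hG
  have inv : ∀ g ∈ Subgroup.closure (insert (Equiv.swap a b) S), ∀ z,
      (orbRel G x z ∨ orbRel G a z ∨ orbRel G b z) →
      ((orbRel G x (g z) ∨ orbRel G a (g z) ∨ orbRel G b (g z)) ∧
       (orbRel G x (g⁻¹ z) ∨ orbRel G a (g⁻¹ z) ∨ orbRel G b (g⁻¹ z))) := by
    intro g hg
    induction hg using Subgroup.closure_induction with
    | mem g hgmem =>
      rcases hgmem with rfl | hgS
      · -- g = swap a b
        intro z hz
        constructor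
        · rcases eq_or_ne z a with rfl | hza
          · right; right; rw [swap_apply_left]; exact orbRel.refl' G b
          rcases eq_or_ne z b with rfl | hzb
          · right; left; rw [swap_apply_right]; exact orbRel.refl' G a
          · rwa [swap_apply_of_ne_of_ne hza hzb]
        · rw [swap_inv]
          rcases eq_or_ne z a with rfl | hza
          · right; right; rw [swap_apply_left]; exact orbRel.refl' G b
          rcases eq_or_ne z b with rfl | hzb
          · right; left; rw [swap_apply_right]; exact orbRel.refl' G a
          · rwa [swap_apply_of_ne_of_ne hza hzb]
      · -- g ∈ S
        intro z hz
        have h1 : orbRel G z (g z) := ⟨g, Subgroup.subset_closure hgS, rfl⟩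
        have h2 : orbRel G z (g⁻¹ z) := ⟨g⁻¹, inv_mem (Subgroup.subset_closure hgS), rfl⟩
        constructor
        · rcases hz with hz | hz | hz
          · exact Or.inl (hz.trans' h1)
          · exact Or.inr (Or.inl (hz.trans' h1))
          · exact Or.inr (Or.inr (hz.trans' h1))
        · rcases hz with hz | hz | hz
          · exact Or.inl (hz.trans' h2)
          · exact Or.inr (Or.inl (hz.trans' h2))
          · exact Or.inr (Or.inr (hz.trans' h2))
    | one =>
      intro z hz
      constructor <;> simpa using hz
    | mul g g' hgmem hg'mem ihg ihg' =>
      intro z hz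
      constructor
      · have := (ihg' z hz).1
        have := (ihg (g' z) this).1
        simpa [mul_apply] using this
      · have := (ihg z hz).2
        have := (ihg' (g⁻¹ z) this).2
        simpa [mul_apply] using this
    | inv g hgmem ihg =>
      intro z hz
      refine ⟨(ihg z hz).2, ?_⟩
      simpa using (ihg z hz).1
  obtain ⟨g, hg, hgx⟩ := h
  have := (inv g hg x (Or.inl (orbRel.refl' G x))).1
  rwa [hgx] at this

lemma RH_oc_le (S : Set (Perm α)) (a b : α) :
    ocount (Subgroup.closure S) ≤ ocount (Subgroup.closure (insert (Equiv.swap a b) S)) + 1 := by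
  classical
  set G := Subgroup.closure S with hG
  set G' := Subgroup.closure (insert (Equiv.swap a b) S) with hG'
  have hGG' : G ≤ G' := Subgroup.closure_mono (Set.subset_insert _ _)
  have wd : ∀ x y : α, orbRel G x y →
      (if orbRel G a x then Sum.inr () else Sum.inl (Quotient.mk (orbSetoid G') x)) =
      (if orbRel G a y then Sum.inr () else Sum.inl (Quotient.mk (orbSetoid G') y)) := by
    intro x y hxy
    by_cases hax : orbRel G a x
    · rw [if_pos hax, if_pos (hax.trans' hxy)]
    · rw [if_neg hax, if_neg (fun h => hax (h.trans' hxy.symm'))]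
      exact congrArg _ (Quotient.sound (orbRel_mono hGG' hxy))
  set f : Quotient (orbSetoid G) → (Quotient (orbSetoid G')) ⊕ Unit :=
    Quotient.lift _ wd with hf
  have hinj : Function.Injective f := by
    intro q q'
    obtain ⟨x, rfl⟩ := Quotient.exists_rep q
    obtain ⟨y, rfl⟩ := Quotient.exists_rep q'
    simp only [hf, Quotient.lift_mk]
    change (if orbRel G a x then Sum.inr () else Sum.inl (Quotient.mk (orbSetoid G') x)) =
      (if orbRel G a y then Sum.inr () else Sum.inl (Quotient.mk (orbSetoid G') y)) → _
    by_cases hax : orbRel G a x <;> by_cases hay : orbRel G a y <;>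
      simp only [hax, hay, if_true, if_false]
    · intro _; exact Quotient.sound (hax.symm'.trans' hay)
    · intro h; exact absurd h (by simp)
    · intro h; exact absurd h (by simp)
    · intro h
      have hxy : orbRel G' x y := Quotient.exact (Sum.inl.inj h)
      apply Quotient.sound
      rcases RH_KO (S := S) (a := a) (b := b) hxy with h1 | h1 | h1
      · exact h1
      · exact absurd h1 hay
      · rcases RH_KO (S := S) (a := a) (b := b) hxy.symm' with h2 | h2 | h2
        · exact h2.symm'
        · exact absurd h2 hax
        · exact h2.symm'.trans' h1
  calc ocount G ≤ Nat.card ((Quotient (orbSetoid G')) ⊕ Unit) :=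
        Nat.card_le_card_of_injective f hinj
    _ = ocount G' + 1 := by rw [Nat.card_sum]; simp [ocount]

lemma RH_oc_eq {S : Set (Perm α)} {a b : α} (hab : orbRel (Subgroup.closure S) a b) :
    ocount (Subgroup.closure S) ≤ ocount (Subgroup.closure (insert (Equiv.swap a b) S)) := by
  classical
  set G := Subgroup.closure S with hG
  set G' := Subgroup.closure (insert (Equiv.swap a b) S) with hG'
  have hGG' : G ≤ G' := Subgroup.closure_mono (Set.subset_insert _ _)
  set f : Quotient (orbSetoid G) → Quotient (orbSetoid G') :=
    Quotient.lift (fun x => Quotient.mk (orbSetoid G') x)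
      (fun x y h => Quotient.sound (orbRel_mono hGG' h)) with hf
  have hinj : Function.Injective f := by
    intro q q'
    obtain ⟨x, rfl⟩ := Quotient.exists_rep q
    obtain ⟨y, rfl⟩ := Quotient.exists_rep q'
    simp only [hf, Quotient.lift_mk]
    intro h
    have hxy : orbRel G' x y := Quotient.exact h
    apply Quotient.sound
    rcases RH_KO (S := S) (a := a) (b := b) hxy with h1 | h1 | h1
    · exact h1
    · rcases RH_KO (S := S) (a := a) (b := b) hxy.symm' with h2 | h2 | h2
      · exact h2.symm'
      · exact h2.symm'.trans' h1
      · exact (hab.trans' h2).symm'.trans' h1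
    · rcases RH_KO (S := S) (a := a) (b := b) hxy.symm' with h2 | h2 | h2
      · exact h2.symm'
      · exact h2.symm'.trans' (hab.trans' h1)
      · exact h2.symm'.trans' h1
  exact Nat.card_le_card_of_injective f hinj

lemma ocount_bot : ocount (⊥ : Subgroup (Perm α)) = Fintype.card α := by
  apply count_eq_card
  intro x y
  constructor
  · rintro ⟨g, hg, h⟩
    rw [Subgroup.mem_bot] at hg
    subst hg
    simpa using h
  · rintro rfl
    exact orbRel.refl' _ x

/-- Main induction: for a list of transpositions. -/
lemma RH_key (l : List (Perm α)) (hl : ∀ t ∈ l, t.IsSwap) :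
    Fintype.card α + ccount l.prod ≤
      l.length + 2 * ocount (Subgroup.closure {x : Perm α | x ∈ l}) := by
  induction l with
  | nil =>
    have h1 : {x : Perm α | x ∈ ([] : List (Perm α))} = ∅ := by ext; simp
    rw [List.prod_nil, ccount_one, List.length_nil, h1, Subgroup.closure_empty, ocount_bot]
    omega
  | cons t l ih =>
    obtain ⟨a, b, hab, rfl⟩ := hl t List.mem_cons_self
    have hset : {x : Perm α | x ∈ Equiv.swap a b :: l} =
        insert (Equiv.swap a b) {x : Perm α | x ∈ l} := by
      ext x; simp [List.mem_cons]
    have ih' := ih (fun t ht => hl t (List.mem_cons_of_mem _ ht))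
    rw [List.prod_cons, List.length_cons, hset]
    by_cases hsc : l.prod.SameCycle a b
    · have habG : orbRel (Subgroup.closure {x : Perm α | x ∈ l}) a b := by
        obtain ⟨k, -, hk⟩ := hsc.exists_pow_eq'
        exact ⟨l.prod ^ k,
          pow_mem (Subgroup.list_prod_mem _ fun x hx => Subgroup.subset_closure hx) k, hk⟩
      have h1 : ccount (Equiv.swap a b * l.prod) ≤ ccount l.prod + 1 := RH_cc_le l.prod a b
      have h2 := RH_oc_eq habG
      omega
    · have h1 := RH_cc_drop hsc
      have h2 := RH_oc_le {x : Perm α | x ∈ l} a b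
      omega

lemma RH_main (l : List (Perm α)) (hl : ∀ t ∈ l, t.IsSwap) (hp : l.prod = 1)
    (htr : ∀ x y : α, orbRel (Subgroup.closure {x : Perm α | x ∈ l}) x y) :
    2 * Fintype.card α ≤ l.length + 2 := by
  have hkey := RH_key l hl
  rw [hp, ccount_one] at hkey
  have hoc : ocount (Subgroup.closure {x : Perm α | x ∈ l}) ≤ 1 := by
    have := Fintype.ofFinite (Quotient (orbSetoid (Subgroup.closure {x : Perm α | x ∈ l})))
    rw [ocount, Nat.card_eq_fintype_card, Fintype.card_le_one_iff_subsingleton]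
    constructor
    intro q q'
    obtain ⟨x, rfl⟩ := Quotient.exists_rep q
    obtain ⟨y, rfl⟩ := Quotient.exists_rep q'
    exact Quotient.sound (htr x y)
  omega

lemma RH_cycle_factor : ∀ (n : ℕ) (c : Perm α), c.support.card = n → c.IsCycle →
    ∃ l : List (Perm α), (∀ t ∈ l, t.IsSwap) ∧ l.prod = c ∧ l.length + 1 = c.support.card := by
  intro n
  induction n using Nat.strong_induction_on with
  | _ n ih =>
    intro c hn hc
    obtain ⟨x, hx, -⟩ := id hc
    by_cases h1 : c (c x) = x
    · have hswap : c = Equiv.swap x (c x) := hc.eq_swap_of_apply_apply_eq_self hx h1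
      refine ⟨[c], ?_, List.prod_singleton, ?_⟩
      · intro t ht
        rw [List.mem_singleton.mp ht]
        exact ⟨x, c x, Ne.symm hx, hswap⟩
      · rw [hswap, card_support_swap (Ne.symm hx)]
        simp
    · have hc' : (Equiv.swap x (c x) * c).IsCycle := hc.swap_mul hx h1
      have hsupp : (Equiv.swap x (c x) * c).support = c.support \ {x} :=
        support_swap_mul_eq c x h1
      have hcard : (Equiv.swap x (c x) * c).support.card + 1 = c.support.card := by
        rw [hsupp, Finset.sdiff_singleton_eq_erase,
          Finset.card_erase_add_one (mem_support.2 hx)]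
      obtain ⟨l, hl1, hl2, hl3⟩ := ih ((Equiv.swap x (c x) * c).support.card)
        (by omega) _ rfl hc'
      refine ⟨Equiv.swap x (c x) :: l, ?_, ?_, ?_⟩
      · intro t ht
        rcases List.mem_cons.mp ht with rfl | ht'
        · exact ⟨x, c x, Ne.symm hx, rfl⟩
        · exact hl1 t ht'
      · rw [List.prod_cons, hl2, ← mul_assoc, swap_mul_self, one_mul]
      · rw [List.length_cons]
        omega

lemma RH_factor (σ : Perm α) :
    ∃ l : List (Perm α), (∀ t ∈ l, t.IsSwap) ∧ l.prod = σ ∧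
      l.length = (σ.cycleType.map fun x => x - 1).sum := by
  obtain ⟨n, hn⟩ : ∃ n, σ.cycleFactorsFinset.card = n := ⟨_, rfl⟩
  induction n using Nat.strong_induction_on generalizing σ with
  | _ n ih =>
    by_cases hσ : σ = 1
    · subst hσ
      exact ⟨[], by simp, List.prod_nil, by simp⟩
    · obtain ⟨f, hf⟩ : ∃ f, f ∈ σ.cycleFactorsFinset := by
        by_contra h
        push_neg at h
        exact hσ (cycleFactorsFinset_eq_empty_iff.mp (Finset.eq_empty_of_forall_notMem h))
      have hfc : f.IsCycle := (mem_cycleFactorsFinset_iff.mp hf).1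
      have hτ : (σ * f⁻¹).cycleFactorsFinset = σ.cycleFactorsFinset \ {f} :=
        cycleFactorsFinset_mul_inv_mem_eq_sdiff hf
      have hτcard : (σ * f⁻¹).cycleFactorsFinset.card < n := by
        rw [hτ, Finset.sdiff_singleton_eq_erase, Finset.card_erase_of_mem hf]
        have : 0 < σ.cycleFactorsFinset.card := Finset.card_pos.mpr ⟨f, hf⟩
        omega
      obtain ⟨lτ, hτ1, hτ2, hτ3⟩ := ih _ hτcard (σ * f⁻¹) rfl
      obtain ⟨lf, hf1, hf2, hf3⟩ := RH_cycle_factor f.support.card f rfl hfc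
      refine ⟨lτ ++ lf, ?_, ?_, ?_⟩
      · intro t ht
        rcases List.mem_append.mp ht with ht' | ht'
        · exact hτ1 t ht'
        · exact hf1 t ht'
      · rw [List.prod_append, hτ2, hf2, inv_mul_cancel_right]
      · have hct : σ.cycleType = f.support.card ::ₘ (σ * f⁻¹).cycleType := by
          rw [cycleType_def, cycleType_def, hτ, Finset.sdiff_singleton_eq_erase,
            Finset.erase_val]
          have hfv : f ∈ σ.cycleFactorsFinset.val := by rwa [← Finset.mem_def]
          conv_lhs => rw [← Multiset.cons_erase hfv]
          rw [Multiset.map_cons]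
          rfl
        rw [List.length_append, hτ3, hct, Multiset.map_cons, Multiset.sum_cons]
        omega

/-- Riemann–Hurwitz nonnegativity of genus. Let `s_1, …, s_M ∈ S_N` satisfy
`s_M ∘ ⋯ ∘ s_1 = id` and generate a transitive subgroup (connectedness of the
associated `N`-fold branched covering).  Define `g` via the Riemann–Hurwitz
formula `∑_{n,i} (k_{n,i} − 1) = 2(g + N − 1)`, where `k_{n,i}` are the cycle
lengths of `s_n`.  Then `g` is a nonnegative integer: the total ramification
`∑_{n,i} (k_{n,i} − 1)` is at least `2(N−1)` and is even. -/
theorem stmt11 (N M : ℕ) (s : Fin M → Equiv.Perm (Fin N))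
    (hprod : ((List.ofFn s).reverse).prod = 1)
    (htrans : ∀ j l : Fin N, ∃ g ∈ Subgroup.closure (Set.range s), g j = l) :
    2 * (N - 1) ≤ ∑ n, ((s n).cycleType.map fun x => x - 1).sum ∧
    Even (∑ n, ((s n).cycleType.map fun x => x - 1).sum) := by
  classical
  have hex : ∀ n : Fin M, ∃ l : List (Equiv.Perm (Fin N)), (∀ t ∈ l, t.IsSwap) ∧
      l.prod = s n ∧ l.length = ((s n).cycleType.map fun x => x - 1).sum :=
    fun n => RH_factor (s n)
  choose lst hsw hpr hlen using hex
  set L : List (Equiv.Perm (Fin N)) := ((List.ofFn lst).reverse).flatten with hL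
  have hLsw : ∀ t ∈ L, t.IsSwap := by
    intro t ht
    rw [hL, List.mem_flatten] at ht
    obtain ⟨l', hl', ht'⟩ := ht
    rw [List.mem_reverse, List.mem_ofFn] at hl'
    obtain ⟨n, rfl⟩ := hl'
    exact hsw n t ht'
  have hcomp : List.map List.prod (List.ofFn lst) = List.ofFn s := by
    rw [List.map_ofFn]
    exact congrArg List.ofFn (funext fun n => hpr n)
  have hLprod : L.prod = 1 := by
    rw [hL, List.prod_flatten, List.map_reverse, hcomp, hprod]
  have hLlen : L.length = ∑ n, ((s n).cycleType.map fun x => x - 1).sum := by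
    rw [hL, List.length_flatten, List.map_reverse, List.map_ofFn, List.sum_reverse,
      List.sum_ofFn]
    exact Finset.sum_congr rfl fun n _ => hlen n
  have hmem : ∀ j : Fin M, s j ∈ Subgroup.closure {x : Equiv.Perm (Fin N) | x ∈ L} := by
    intro j
    rw [← hpr j]
    refine Subgroup.list_prod_mem _ fun x hx => Subgroup.subset_closure ?_
    rw [hL]
    show x ∈ ((List.ofFn lst).reverse).flatten
    rw [List.mem_flatten]
    exact ⟨lst j, List.mem_reverse.mpr (List.mem_ofFn.mpr ⟨j, rfl⟩), hx⟩
  have htr : ∀ x y : Fin N, orbRel (Subgroup.closure {x : Equiv.Perm (Fin N) | x ∈ L}) x y := by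
    intro x y
    obtain ⟨g, hg, hgx⟩ := htrans x y
    refine ⟨g, ?_, hgx⟩
    have hle : Subgroup.closure (Set.range s) ≤
        Subgroup.closure {x : Equiv.Perm (Fin N) | x ∈ L} := by
      rw [Subgroup.closure_le]
      rintro _ ⟨j, rfl⟩
      exact hmem j
    exact hle hg
  have hmain := RH_main L hLsw hLprod htr
  rw [Fintype.card_fin] at hmain
  constructor
  · rw [← hLlen]
    omega
  · rw [← hLlen]
    have hsign := Equiv.Perm.sign_prod_list_swap hLsw
    rw [hLprod] at hsign
    rcases Nat.even_or_odd L.length with he | ho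
    · exact he
    · exfalso
      rw [ho.neg_one_pow] at hsign
      rw [map_one] at hsign
      exact absurd hsign (by decide)
end

section
/- Let H(x,y) = ∑_{s≥0} ∑_{p=0}^{s} H^{(p,s-p)}(0,0)/(p!(s−p)!) x^p y^{s−p} be a symmetric formal power series in two variables (H(x,y) = H(y,x)), let k ≥ 2, and γ = e^{2πi/k}. Then ∑_{1 ≤ j < l ≤ k} H(γ^j x, γ^l x) γ^{j+l} · x^{2} / (k² x^{2(k-1)}), expanded and evaluated for the residue in λ = x^k at 0, yields: −(residue) = (1/(2k)) ∑_{p=0}^{k-2} H^{(p,k-2-p)}(0,0)/(p!(k−2−p)!). Equivalently, ∑_{1≤j<l≤k} γ^{(p+1)l + (k−p−1)j} summed appropriately gives −k/2 times the diagonal restriction, using ∑ of the geometric progressions. -/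
open Complex Finset

/-!
With `a = p + 1` and `b = k - p - 1`, the sums `S p` and `S (k - 2 - p)` are the sums of
`γ ^ (a l + b j)` over the strict upper and strict lower triangle of `[1, k]²`. Together they
give the full square, which factors as `(∑ γ ^ (b j)) (∑ γ ^ (a l)) = 0` since `0 < a < k`,
minus the diagonal, where `γ ^ (a j + b j) = (γ ^ k) ^ j = 1`; hence `S p + S (k - 2 - p) = -k`.
Pairing `p` with `k - 2 - p` in the residue and using the symmetry of `c` then replaces each
`S p` by `-k / 2`.
-/

theorem Finset.sum_sum_ite_lt_add_sum_sum_ite_gt_add_sum_diag {ι M : Type*} [LinearOrder ι]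
    [AddCommMonoid M] (s : Finset ι) (f : ι → ι → M) :
    (∑ j ∈ s, ∑ l ∈ s, if j < l then f j l else 0) +
        (∑ j ∈ s, ∑ l ∈ s, if l < j then f j l else 0) + ∑ j ∈ s, f j j =
      ∑ j ∈ s, ∑ l ∈ s, f j l := by
  simp only [← sum_add_distrib]
  refine sum_congr rfl fun j hj => ?_
  rw [← sum_ite_eq s j (f j) |>.trans (if_pos hj), ← sum_add_distrib]
  refine sum_congr rfl fun l _ => ?_
  rcases lt_trichotomy j l with h | rfl | h
  · simp [h, h.not_gt, h.ne]
  · simp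
  · simp [h, h.not_gt, h.ne']

theorem Finset.sum_Icc_one_pow_eq_zero {K : Type*} [Field K] {w : K} {k : ℕ} (hwk : w ^ k = 1)
    (hw : w ≠ 1) : ∑ l ∈ Icc 1 k, w ^ l = 0 := by
  rw [← Ico_add_one_right_eq_Icc, sum_Ico_eq_sum_range, add_tsub_cancel_right]
  simp only [add_comm 1, pow_succ, ← sum_mul, geom_sum_eq hw, hwk, sub_self, zero_div, zero_mul]

theorem Finset.two_mul_sum_range_mul_eq_of_reflect {R : Type*} [CommSemiring R] {n : ℕ}
    {f g : ℕ → R} {C : R} (hf : ∀ p < n, f (n - 1 - p) = f p)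
    (hg : ∀ p < n, g p + g (n - 1 - p) = C) :
    2 * ∑ p ∈ range n, f p * g p = C * ∑ p ∈ range n, f p := by
  calc 2 * ∑ p ∈ range n, f p * g p
      = ∑ p ∈ range n, f p * g p + ∑ p ∈ range n, f (n - 1 - p) * g (n - 1 - p) := by
        rw [sum_range_reflect (fun p => f p * g p), two_mul]
    _ = ∑ p ∈ range n, f p * C := by
        rw [← sum_add_distrib]
        refine sum_congr rfl fun p hp => ?_
        rw [hf p (mem_range.1 hp), ← mul_add, hg p (mem_range.1 hp)]
    _ = C * ∑ p ∈ range n, f p := by rw [← sum_mul, mul_comm]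

def upperTriangleSum {R : Type*} [Semiring R] (ζ : R) (k a b : ℕ) : R :=
  ∑ j ∈ Icc 1 k, ∑ l ∈ Icc 1 k, if j < l then ζ ^ (a * l + b * j) else 0

theorem IsPrimitiveRoot.upperTriangleSum_add_swap {K : Type*} [Field K] {ζ : K} {k a b : ℕ}
    (hζ : IsPrimitiveRoot ζ k) (ha : 0 < a) (hb : 0 < b) (hab : a + b = k) :
    upperTriangleSum ζ k a b + upperTriangleSum ζ k b a = -(k : K) := by
  have hlower : upperTriangleSum ζ k b a =
      ∑ j ∈ Icc 1 k, ∑ l ∈ Icc 1 k, if l < j then ζ ^ (a * l + b * j) else 0 := by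
    rw [upperTriangleSum, sum_comm]
    simp only [add_comm]
  have hsquare : ∑ j ∈ Icc 1 k, ∑ l ∈ Icc 1 k, ζ ^ (a * l + b * j) = 0 := by
    have hgeom : ∑ l ∈ Icc 1 k, (ζ ^ a) ^ l = 0 :=
      sum_Icc_one_pow_eq_zero (by rw [← pow_mul, mul_comm, pow_mul, hζ.pow_eq_one, one_pow])
        (hζ.pow_ne_one_of_pos_of_lt ha.ne' (by omega))
    simp only [pow_add, pow_mul, ← sum_mul, hgeom, zero_mul, sum_const_zero]
  have hdiag : ∑ j ∈ Icc 1 k, ζ ^ (a * j + b * j) = k := by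
    simp [← add_mul, hab, pow_mul, hζ.pow_eq_one]
  have := sum_sum_ite_lt_add_sum_sum_ite_gt_add_sum_diag (Icc 1 k)
    fun j l => ζ ^ (a * l + b * j)
  rw [hsquare, hdiag] at this
  rw [upperTriangleSum, hlower]
  linear_combination this

/-- The combinatorial core of the Bergmann-kernel residue lemma.  Let `k ≥ 2`,
`γ = e^{2πi/k}`, and let `H(x,y) = ∑_{s,p} c_{p,s-p}/(p!(s−p)!) x^p y^{s−p}` be
a symmetric formal power series (`c p q = c q p`).  Set
`S p = ∑_{1≤j<l≤k} γ^{(p+1)l + (k−p−1)j}`.  Then the geometric-progression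
identity `S p + S (k−2−p) = −k` holds (so each `S p` contributes `−k/2` after
symmetrization), and the residue computation yields
`−(1/k²) ∑_{p=0}^{k-2} c_{p,k-2-p}/(p!(k−2−p)!) · S p
  = (1/(2k)) ∑_{p=0}^{k-2} c_{p,k-2-p}/(p!(k−2−p)!)`,
which equals `(1/(12k)) · R^{(k-2)}(0)/(k−2)!` with `R(x) = 6 H(x,x)`, i.e.
`(1/(12k)) · 6 ∑_{p=0}^{k-2} c_{p,k-2-p}/(p!(k−2−p)!)`. -/
theorem stmt19 (k : ℕ) (hk : 2 ≤ k) (c : ℕ → ℕ → ℂ) (hsym : ∀ p q, c p q = c q p) :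
    let γ : ℂ := Complex.exp (2 * Real.pi * Complex.I / k)
    let S : ℕ → ℂ := fun p => ∑ j ∈ Finset.Icc 1 k, ∑ l ∈ Finset.Icc 1 k,
      if j < l then γ ^ ((p + 1) * l + (k - p - 1) * j) else 0
    let T : ℂ := ∑ p ∈ Finset.range (k - 1),
      c p (k - 2 - p) / ((p.factorial : ℂ) * ((k - 2 - p).factorial : ℂ))
    (∀ p, p ≤ k - 2 → S p + S (k - 2 - p) = -(k : ℂ)) ∧
    (-(1 / (k : ℂ) ^ 2) * ∑ p ∈ Finset.range (k - 1),
        (c p (k - 2 - p) / ((p.factorial : ℂ) * ((k - 2 - p).factorial : ℂ))) * S p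
      = 1 / (2 * (k : ℂ)) * T) ∧
    (1 / (2 * (k : ℂ)) * T = 1 / (12 * (k : ℂ)) * (6 * T)) := by
  intro γ S T
  have hγ : IsPrimitiveRoot γ k := isPrimitiveRoot_exp k (by omega)
  have hS : ∀ p, p ≤ k - 2 → S p + S (k - 2 - p) = -(k : ℂ) := fun p hp => by
    have hreflect : S (k - 2 - p) = upperTriangleSum γ k (k - p - 1) (p + 1) := by
      simp only [S, upperTriangleSum, show k - 2 - p + 1 = k - p - 1 by omega,
        show k - (k - 2 - p) - 1 = p + 1 by omega]
    exact hreflect ▸ hγ.upperTriangleSum_add_swap (by omega) (by omega) (by omega)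
  have hpair := two_mul_sum_range_mul_eq_of_reflect (n := k - 1) (g := S) (C := -(k : ℂ))
    (f := fun p => c p (k - 2 - p) / ((p.factorial : ℂ) * ((k - 2 - p).factorial : ℂ)))
    (fun p hp => by
      simp only [show k - 1 - 1 - p = k - 2 - p by omega, show k - 2 - (k - 2 - p) = p by omega,
        hsym p, mul_comm])
    (fun p hp => by rw [show k - 1 - 1 - p = k - 2 - p by omega]; exact hS p (by omega))
  have hk0 : (k : ℂ) ≠ 0 := Nat.cast_ne_zero.2 (by omega)
  refine ⟨hS, ?_, by field_simp; ring⟩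
  linear_combination (norm := skip) (-(1 / (2 * (k : ℂ) ^ 2))) * hpair
  field_simp
  ring
end
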